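/- There exist a positive integer c and a constant C3 > 0, depending only on C1, C2, s0, ε0, r, q and m, such that for every k ≥ k0, every n with c·φ_k ≤ n < c·φ_{k+1}, every n-optimal set α_n ∈ C_{n,r}(μ), every Voronoi partition (P_a(α_n))_{a∈α_n}, and every a ∈ α_n: I_a(α_n,μ) ≤ C3·m^{−k(s0+r)}. -/

import Mathlib

open MeasureTheory Metric Set

noncomputable section

variable {E : Type*} [NormedAddCommGroup E] [NormedSpace ℝ E]
  [MeasurableSpace E] [BorelSpace E]

/-- The (topological) support of a Borel measure: the set of points all of whose
neighborhoods have positive measure. -/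
def msupp (μ : Measure E) : Set E := {x | ∀ ε : ℝ, 0 < ε → 0 < μ (ball x ε)}

/-- The set of achievable quantization integrals `∫ d(x,α)^r dν` over sets `α` with
`1 ≤ card α ≤ n`. -/
def quantSet (ν : Measure E) (r : ℝ) (n : ℕ) : Set ℝ :=
  {I | ∃ α : Finset E, α.Nonempty ∧ α.card ≤ n ∧ I = ∫ x, infDist x (α : Set E) ^ r ∂ν}

/-- The `n`-th quantization error of order `r`, raised to the power `r`:
`e_{n,r}(ν)^r = inf { ∫ d(x,α)^r dν : 1 ≤ card α ≤ n }`. -/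
def quantErrPow (ν : Measure E) (r : ℝ) (n : ℕ) : ℝ := sInf (quantSet ν r n)

/-- `α` is an `n`-optimal set for `ν` of order `r`. -/
def IsOptimalSet (ν : Measure E) (r : ℝ) (n : ℕ) (α : Finset E) : Prop :=
  α.Nonempty ∧ α.card ≤ n ∧ (∫ x, infDist x (α : Set E) ^ r ∂ν) = quantErrPow ν r n

/-- `P` is a Voronoi partition (into Borel sets) with respect to the finite set `α`. -/
def IsVoronoiPartition (α : Finset E) (P : E → Set E) : Prop :=
  (∀ a ∈ α, MeasurableSet (P a)) ∧
  ((⋃ a ∈ α, P a) = univ) ∧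
  (∀ a ∈ α, ∀ b ∈ α, a ≠ b → Disjoint (P a) (P b)) ∧
  (∀ a ∈ α, {x | dist x a < infDist x ((α : Set E) \ {a})} ⊆ P a) ∧
  (∀ a ∈ α, P a ⊆ {x | dist x a = infDist x (α : Set E)})

/-- `I_a(α,ν) = ∫_{P_a(α)} d(x,α)^r dν`. -/
def voronoiI (ν : Measure E) (r : ℝ) (α : Finset E) (P : E → Set E) (a : E) : ℝ :=
  ∫ x in P a, infDist x (α : Set E) ^ r ∂ν

/-- `μ` is `s0`-dimensional Ahlfors–David regular with constants `ε0, C1, C2`, together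
with the global upper bound (valid for all centers and radii). -/
def IsAhlfors (μ : Measure E) (s0 ε0 C1 C2 : ℝ) : Prop :=
  0 < s0 ∧ 0 < ε0 ∧ 0 < C1 ∧ 0 < C2 ∧
  (∀ x ∈ msupp μ, ∀ ε : ℝ, 0 < ε → ε < ε0 →
    ENNReal.ofReal (C1 * ε ^ s0) ≤ μ (closedBall x ε) ∧
    μ (closedBall x ε) ≤ ENNReal.ofReal (C2 * ε ^ s0)) ∧
  (∀ x : E, ∀ ε : ℝ, 0 < ε → μ (closedBall x ε) ≤ ENNReal.ofReal (C2 * ε ^ s0))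

/-- `h` is a similitude of ratio `ρ`. -/
def IsSimilitude (h : E → E) (ρ : ℝ) : Prop :=
  Function.Surjective h ∧ ∀ x y, dist (h x) (h y) = ρ * dist x y

/-- The measure `λ_B = μ(·|B) ∘ h`, i.e. `λ_B(A) = μ(h(A) ∩ B)/μ(B)`. -/
def condPull (μ : Measure E) (B : Set E) (h : E → E) : Measure E :=
  Measure.comap h (ProbabilityTheory.cond μ B)

/-- There exist `j` pairwise disjoint closed balls of radius `ρ` centered in `K`. -/
def PackingNum (K : Set E) (ρ : ℝ) (j : ℕ) : Prop :=
  ∃ c : Fin j → E, (∀ i, c i ∈ K) ∧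
    Pairwise fun i i' => Disjoint (closedBall (c i) ρ) (closedBall (c i') ρ)

end

/-!
Write `K = supp μ` and `η = m^{-k}`. A maximal packing of `K` by `φ_k` disjoint balls of radius
`η` turns its centres into a `2η`-net of `K`, so `e_{n,r}^r ≤ (2η)^r` as soon as `n ≥ φ_k`.

The heart of the proof: if `n ≥ c φ_k` with `c` large and `η` small, then every point of `K` lies
within `2η` of an `n`-optimal set `α`. Otherwise let `δ > 2η` be the largest distance from `K`
to `α`, attained at `x₀`. By pigeonhole, `c` points of `α` lie within `2δ` of one net point, and
the lightest of their Voronoi cells has mass at most `C2 (3δ)^{s0} / c` by the upper Ahlfors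
bound. Deleting its centre costs at most `(5δ)^r` times that mass, while adding `x₀` gains at
least `(3^r - 1) C1 (δ/4)^{s0+r}` by the lower Ahlfors bound, which contradicts optimality once
`c` is large. Each cell then lies in a ball of radius `2η`, whence `I_a ≤ C2 (2η)^{s0+r}`.
For `η` bounded below, the trivial bound `I_a ≤ e_{n,r}^r ≤ (2η)^r` is already of order
`η^{s0+r}`.
-/

open Filter Topology

section Measure

variable {X : Type*} [MeasurableSpace X] {μ : Measure X}

theorem integral_le_integral_add_mul_measureReal [IsFiniteMeasure μ] {f g : X → ℝ}
    (hf : Integrable f μ) (hg : Integrable g μ) {B : Set X} (hB : MeasurableSet B) {G : ℝ}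
    (h_off : ∀ᵐ x ∂μ, x ∉ B → g x ≤ f x) (h_on : ∀ᵐ x ∂μ, x ∈ B → g x ≤ f x + G) :
    ∫ x, g x ∂μ ≤ ∫ x, f x ∂μ + G * μ.real B := by
  have hind : Integrable (B.indicator fun _ => G) μ := (integrable_const G).indicator hB
  calc ∫ x, g x ∂μ ≤ ∫ x, (f x + B.indicator (fun _ => G) x) ∂μ := by
        refine integral_mono_ae hg (hf.add hind) ?_
        filter_upwards [h_off, h_on] with x hx_off hx_on
        by_cases hx : x ∈ B
        · simpa [hx] using hx_on hx
        · simpa [hx] using hx_off hx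
    _ = ∫ x, f x ∂μ + G * μ.real B := by
        rw [integral_add hf hind, integral_indicator_const _ hB, smul_eq_mul, mul_comm]

theorem exists_card_mul_measure_le {ι : Type*} {F : Finset ι} (hF : F.Nonempty)
    {Q : ι → Set X} (hQ : ∀ i ∈ F, MeasurableSet (Q i))
    (hdisj : (F : Set ι).PairwiseDisjoint Q) {S : Set X} (hS : ∀ i ∈ F, Q i ⊆ S) :
    ∃ i ∈ F, F.card * μ (Q i) ≤ μ S := by
  obtain ⟨i, hi, hmin⟩ := F.exists_min_image (fun i => μ (Q i)) hF
  refine ⟨i, hi, ?_⟩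
  calc F.card * μ (Q i) = F.card • μ (Q i) := (nsmul_eq_mul _ _).symm
    _ ≤ ∑ j ∈ F, μ (Q j) := F.card_nsmul_le_sum _ _ hmin
    _ = μ (⋃ j ∈ F, Q j) := (measure_biUnion_finset hdisj hQ).symm
    _ ≤ μ S := measure_mono (iUnion₂_subset hS)

end Measure

section Packing

variable {E : Type*} [NormedAddCommGroup E]

theorem packingNum_one {K : Set E} (hK : K.Nonempty) (ρ : ℝ) : PackingNum K ρ 1 := by
  obtain ⟨x, hx⟩ := hK
  exact ⟨fun _ => x, fun _ => hx, fun i j hij => absurd (Subsingleton.elim i j) hij⟩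

theorem exists_net_of_isGreatest_packingNum {K : Set E} {ρ : ℝ} {N : ℕ}
    (hg : IsGreatest {j | PackingNum K ρ j} N) :
    ∃ z : Fin N → E, (∀ i, z i ∈ K) ∧ ∀ x ∈ K, ∃ i, dist x (z i) ≤ 2 * ρ := by
  obtain ⟨z, hzK, hdisj⟩ := hg.1
  refine ⟨z, hzK, fun x hx => ?_⟩
  by_contra! hfar
  have hx_disj : ∀ i, Disjoint (closedBall x ρ) (closedBall (z i) ρ) := fun i =>
    closedBall_disjoint_closedBall (by linarith [hfar i])
  have hpack : PackingNum K ρ (N + 1) :=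
    ⟨Fin.cons x z, Fin.cases hx hzK, pairwise_fin_succ_iff.2
      ⟨fun i => (hx_disj i).symm, hx_disj, fun _ _ hij => hdisj hij⟩⟩
  exact (hg.2 hpack).not_gt N.lt_succ_self

theorem isBounded_of_isGreatest_packingNum {K : Set E} {ρ : ℝ} {N : ℕ}
    (hg : IsGreatest {j | PackingNum K ρ j} N) : Bornology.IsBounded K := by
  obtain ⟨z, -, hnet⟩ := exists_net_of_isGreatest_packingNum hg
  refine (Bornology.isBounded_iUnion.2 fun i => isBounded_closedBall (x := z i) (r := 2 * ρ)).subset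
    fun x hx => ?_
  obtain ⟨i, hi⟩ := hnet x hx
  exact mem_iUnion.2 ⟨i, hi⟩

theorem exists_large_cluster {α : Finset E} {N c : ℕ} (hN : 0 < N) (z : Fin N → E) {D : ℝ}
    (hD : ∀ a ∈ α, ∃ i, dist a (z i) ≤ D) (hcard : c * N ≤ α.card) :
    ∃ i, ∃ F ⊆ α, c ≤ F.card ∧ ∀ a ∈ F, dist a (z i) ≤ D := by
  classical
  have : Nonempty (Fin N) := ⟨⟨0, hN⟩⟩
  choose! ι hι using hD
  obtain ⟨i, -, hi⟩ := Finset.exists_le_card_fiber_of_mul_le_card_of_maps_to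
    (fun a _ => Finset.mem_univ (ι a)) ⟨⟨0, hN⟩, Finset.mem_univ _⟩
    (by rwa [Finset.card_univ, Fintype.card_fin, mul_comm])
  refine ⟨i, α.filter (fun a => ι a = i), Finset.filter_subset _ _, hi, fun a ha => ?_⟩
  obtain ⟨haα, rfl⟩ := Finset.mem_filter.1 ha
  exact hι a haα

end Packing

section Quantization

variable {E : Type*} [NormedAddCommGroup E] [MeasurableSpace E] {μ : Measure E}
  {r s0 ε0 C1 C2 : ℝ} {n : ℕ} {α : Finset E} {P : E → Set E} {a : E}

theorem msupp_eq_support (μ : Measure E) : msupp μ = μ.support := by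
  ext x
  exact nhds_basis_ball.mem_measureSupport.symm

theorem isClosed_msupp (μ : Measure E) : IsClosed (msupp μ) :=
  msupp_eq_support μ ▸ Measure.isClosed_support

theorem msupp_mem_ae [SecondCountableTopology E] (μ : Measure E) : msupp μ ∈ ae μ := by
  rw [msupp_eq_support]
  exact Measure.support_mem_ae

theorem msupp_nonempty [SecondCountableTopology E] (μ : Measure E) [IsProbabilityMeasure μ] :
    (msupp μ).Nonempty := by
  rw [msupp_eq_support]
  exact Measure.nonempty_support (IsProbabilityMeasure.ne_zero μ)

theorem nonempty_inter_msupp [SecondCountableTopology E] {S : Set E} (hS : μ S ≠ 0) :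
    (S ∩ msupp μ).Nonempty :=
  msupp_eq_support μ ▸ Measure.nonempty_inter_support_of_pos (pos_iff_ne_zero.2 hS)

theorem quantErrPow_le_integral {β : Finset E} (hβ : β.Nonempty) (hcard : β.card ≤ n) :
    quantErrPow μ r n ≤ ∫ x, infDist x (β : Set E) ^ r ∂μ := by
  refine csInf_le ⟨0, ?_⟩ ⟨β, hβ, hcard, rfl⟩
  rintro _ ⟨γ, -, -, rfl⟩
  exact integral_nonneg fun _ => Real.rpow_nonneg infDist_nonneg r

theorem IsAhlfors.nullSingletonClass (hμ : IsAhlfors μ s0 ε0 C1 C2) : NullSingletonClass μ := by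
  refine ⟨fun x => le_antisymm ?_ zero_le⟩
  have hlim : Tendsto (fun ρ : ℝ => ENNReal.ofReal (C2 * ρ ^ s0)) (𝓝[>] 0) (𝓝 0) := by
    have hcont : ContinuousAt (fun ρ : ℝ => ENNReal.ofReal (C2 * ρ ^ s0)) 0 :=
      ENNReal.continuous_ofReal.continuousAt.comp
        (continuousAt_const.mul (Real.continuousAt_rpow_const 0 s0 (Or.inr hμ.1.le)))
    have h := hcont.tendsto
    rw [Real.zero_rpow hμ.1.ne', mul_zero, ENNReal.ofReal_zero] at h
    exact h.mono_left nhdsWithin_le_nhds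
  refine ge_of_tendsto hlim (eventually_nhdsWithin_of_forall fun ρ (hρ : 0 < ρ) => ?_)
  exact (measure_mono (singleton_subset_iff.2 (mem_closedBall_self hρ.le))).trans
    (hμ.2.2.2.2.2 x ρ hρ)

theorem IsAhlfors.mul_rpow_le_measureReal [IsFiniteMeasure μ] (hμ : IsAhlfors μ s0 ε0 C1 C2)
    {x : E} (hx : x ∈ msupp μ) {ρ : ℝ} (hρ : 0 < ρ) (hρε : ρ < ε0) :
    C1 * ρ ^ s0 ≤ μ.real (closedBall x ρ) :=
  (ENNReal.ofReal_le_iff_le_toReal (measure_ne_top μ _)).1 (hμ.2.2.2.2.1 x hx ρ hρ hρε).1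

theorem IsAhlfors.measureReal_le [SecondCountableTopology E] (hμ : IsAhlfors μ s0 ε0 C1 C2)
    {S : Set E} {x : E} {ρ : ℝ} (hρ : 0 < ρ) (hS : S ∩ msupp μ ⊆ closedBall x ρ) :
    μ.real S ≤ C2 * ρ ^ s0 := by
  rw [measureReal_def, ← measure_inter_conull (msupp_mem_ae μ)]
  exact ENNReal.toReal_le_of_le_ofReal (by have := hμ.2.2.2.1; positivity)
    ((measure_mono hS).trans (hμ.2.2.2.2.2 x ρ hρ))

theorem IsVoronoiPartition.dist_eq_infDist (hP : IsVoronoiPartition α P) (ha : a ∈ α) {x : E}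
    (hx : x ∈ P a) : dist x a = infDist x (α : Set E) :=
  hP.2.2.2.2 a ha hx

theorem IsVoronoiPartition.infDist_erase_eq [DecidableEq E] (hP : IsVoronoiPartition α P)
    (herase : (α.erase a).Nonempty) {x : E} (hx : x ∉ P a) :
    infDist x ((α.erase a : Finset E) : Set E) = infDist x (α : Set E) := by
  have hxU : x ∈ ⋃ b ∈ α, P b := hP.2.1 ▸ mem_univ x
  obtain ⟨b, hb, hxb⟩ : ∃ b ∈ α, x ∈ P b := by simpa only [mem_iUnion, exists_prop] using hxU
  have hb' : b ∈ α.erase a := Finset.mem_erase.2 ⟨fun h => hx (h ▸ hxb), hb⟩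
  refine le_antisymm ?_ (infDist_le_infDist_of_subset (by simp) (Finset.coe_nonempty.2 herase))
  rw [← hP.dist_eq_infDist hb hxb]
  exact infDist_le_dist_of_mem (Finset.mem_coe.2 hb')

theorem IsVoronoiPartition.voronoiI_le [SecondCountableTopology E] [IsFiniteMeasure μ]
    (hP : IsVoronoiPartition α P) (hr : 0 ≤ r) (ha : a ∈ α) {D : ℝ}
    (hD : ∀ x ∈ P a ∩ msupp μ, infDist x (α : Set E) ≤ D) :
    voronoiI μ r α P a ≤ D ^ r * μ.real (P a) := by
  calc voronoiI μ r α P a ≤ ∫ _ in P a, D ^ r ∂μ := by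
        refine integral_mono_of_nonneg (ae_of_all _ fun x => Real.rpow_nonneg infDist_nonneg r)
          (integrable_const _) ?_
        filter_upwards [ae_restrict_mem (hP.1 a ha), ae_restrict_of_ae (msupp_mem_ae μ)]
          with x hxP hxK
        exact Real.rpow_le_rpow infDist_nonneg (hD x ⟨hxP, hxK⟩) hr
    _ = D ^ r * μ.real (P a) := by rw [setIntegral_const, smul_eq_mul, mul_comm]

theorem IsAhlfors.voronoiI_le [SecondCountableTopology E] [IsFiniteMeasure μ]
    (hμ : IsAhlfors μ s0 ε0 C1 C2) (hP : IsVoronoiPartition α P) (hr : 0 ≤ r) (ha : a ∈ α)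
    {D : ℝ} (hD0 : 0 < D) (hD : ∀ x ∈ P a ∩ msupp μ, infDist x (α : Set E) ≤ D) :
    voronoiI μ r α P a ≤ C2 * D ^ (s0 + r) := by
  have hmass : μ.real (P a) ≤ C2 * D ^ s0 := by
    refine hμ.measureReal_le (x := a) hD0 fun x hx => ?_
    rw [mem_closedBall, hP.dist_eq_infDist ha hx.1]
    exact hD x hx
  calc voronoiI μ r α P a ≤ D ^ r * μ.real (P a) := hP.voronoiI_le hr ha hD
    _ ≤ D ^ r * (C2 * D ^ s0) := by gcongr
    _ = C2 * D ^ (s0 + r) := by rw [Real.rpow_add hD0]; ring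

variable [BorelSpace E]

theorem integrable_infDist_rpow [SecondCountableTopology E] [IsFiniteMeasure μ]
    (hK : Bornology.IsBounded (msupp μ)) (hr : 0 ≤ r) {γ : Set E} (hγ : γ.Nonempty) :
    Integrable (fun x => infDist x γ ^ r) μ := by
  obtain ⟨b, hb⟩ := hγ
  obtain ⟨R, hR⟩ := hK.subset_closedBall b
  refine Integrable.of_bound
    ((continuous_infDist_pt γ).rpow_const fun _ => Or.inr hr).aestronglyMeasurable (R ^ r) ?_
  filter_upwards [msupp_mem_ae μ] with x hx
  rw [Real.norm_of_nonneg (Real.rpow_nonneg infDist_nonneg r)]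
  exact Real.rpow_le_rpow infDist_nonneg ((infDist_le_dist_of_mem hb).trans (hR hx)) hr

theorem quantErrPow_le_of_isGreatest_packingNum [SecondCountableTopology E]
    [IsProbabilityMeasure μ] (hr : 0 ≤ r) {ρ : ℝ} {N : ℕ}
    (hg : IsGreatest {j | PackingNum (msupp μ) ρ j} N) (hN : N ≤ n) :
    quantErrPow μ r n ≤ (2 * ρ) ^ r := by
  classical
  obtain ⟨z, -, hnet⟩ := exists_net_of_isGreatest_packingNum hg
  have : Nonempty (Fin N) := ⟨⟨0, hg.2 (packingNum_one (msupp_nonempty μ) ρ)⟩⟩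
  set β : Finset E := Finset.univ.image z
  have hβ : β.Nonempty := Finset.univ_nonempty.image z
  calc quantErrPow μ r n ≤ ∫ x, infDist x (β : Set E) ^ r ∂μ :=
        quantErrPow_le_integral hβ (Finset.card_image_le.trans (by simpa using hN))
    _ ≤ ∫ _, (2 * ρ) ^ r ∂μ := by
        refine integral_mono_ae (integrable_infDist_rpow (isBounded_of_isGreatest_packingNum hg)
          hr (Finset.coe_nonempty.2 hβ)) (integrable_const _) ?_
        filter_upwards [msupp_mem_ae μ] with x hx
        obtain ⟨i, hi⟩ := hnet x hx
        exact Real.rpow_le_rpow infDist_nonneg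
          ((infDist_le_dist_of_mem (by simp [β])).trans hi) hr
    _ = (2 * ρ) ^ r := by simp

theorem IsAhlfors.integral_add_mul_le [IsFiniteMeasure μ] (hμ : IsAhlfors μ s0 ε0 C1 C2)
    {f g : E → ℝ} (hf : Integrable f μ) (hg : Integrable g μ) {x₀ : E} (hx₀ : x₀ ∈ msupp μ)
    {ρ : ℝ} (hρ : 0 < ρ) (hρε : ρ < ε0) {G : ℝ} (hG : 0 ≤ G) (hgf : ∀ x, g x ≤ f x)
    (h_on : ∀ x ∈ closedBall x₀ ρ, g x + G ≤ f x) :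
    ∫ x, g x ∂μ + G * (C1 * ρ ^ s0) ≤ ∫ x, f x ∂μ := by
  have h := integral_le_integral_add_mul_measureReal hf hg measurableSet_closedBall (G := -G)
    (ae_of_all _ fun x _ => hgf x) (ae_of_all _ fun x hx => by linarith [h_on x hx])
  have := mul_le_mul_of_nonneg_left (hμ.mul_rpow_le_measureReal hx₀ hρ hρε) hG
  linarith

theorem IsAhlfors.infDist_lt_of_integral_lt [SecondCountableTopology E] [IsFiniteMeasure μ]
    (hμ : IsAhlfors μ s0 ε0 C1 C2) (hr : 0 ≤ r) (hK : Bornology.IsBounded (msupp μ))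
    {γ : Set E} (hγ : γ.Nonempty) {ρ : ℝ} (hρ : 0 < ρ) (hρε : ρ < ε0)
    (hint : ∫ x, infDist x γ ^ r ∂μ < C1 * ρ ^ (s0 + r)) {x₀ : E} (hx₀ : x₀ ∈ msupp μ) :
    infDist x₀ γ < 2 * ρ := by
  by_contra! hfar
  have h_on : ∀ x ∈ closedBall x₀ ρ, (0 : ℝ) + ρ ^ r ≤ infDist x γ ^ r := by
    intro x hx
    rw [mem_closedBall, dist_comm] at hx
    have := infDist_le_infDist_add_dist (x := x₀) (y := x) (s := γ)
    rw [zero_add]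
    exact Real.rpow_le_rpow hρ.le (by linarith) hr
  have h := hμ.integral_add_mul_le (g := fun _ => 0) (integrable_infDist_rpow hK hr hγ)
    (integrable_zero _ _ _) hx₀ hρ hρε (by positivity)
    (fun x => Real.rpow_nonneg infDist_nonneg r) h_on
  rw [integral_zero, zero_add] at h
  rw [Real.rpow_add hρ] at hint
  linarith

theorem IsAhlfors.quantErrPow_add_le_integral [SecondCountableTopology E] [IsFiniteMeasure μ]
    (hμ : IsAhlfors μ s0 ε0 C1 C2) (hr : 0 ≤ r) (hK : Bornology.IsBounded (msupp μ))
    {β : Finset E} (hβ : β.Nonempty) (hcard : β.card < n) {x₀ : E}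
    (hx₀ : x₀ ∈ msupp μ) {ρ : ℝ} (hρ : 0 < ρ) (hρε : ρ < ε0)
    (hfar : 4 * ρ ≤ infDist x₀ (β : Set E)) :
    quantErrPow μ r n + (3 ^ r - 1) * C1 * ρ ^ (s0 + r)
      ≤ ∫ x, infDist x (β : Set E) ^ r ∂μ := by
  classical
  set γ : Finset E := insert x₀ β
  have hβγ : (β : Set E) ⊆ γ := by simp [γ, subset_insert]
  have hx₀γ : x₀ ∈ (γ : Set E) := by simp [γ]
  have h3r : 1 ≤ (3 : ℝ) ^ r := Real.one_le_rpow (by norm_num) hr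
  -- near `x₀`, the distance to `β` is at least `3ρ` and the distance to `γ` at most `ρ`
  have h_on : ∀ x ∈ closedBall x₀ ρ,
      infDist x (γ : Set E) ^ r + (3 ^ r - 1) * ρ ^ r ≤ infDist x (β : Set E) ^ r := by
    intro x hx
    rw [mem_closedBall] at hx
    have hγx : infDist x (γ : Set E) ^ r ≤ ρ ^ r :=
      Real.rpow_le_rpow infDist_nonneg ((infDist_le_dist_of_mem hx₀γ).trans hx) hr
    have hβx : (3 * ρ) ^ r ≤ infDist x (β : Set E) ^ r := by
      have := infDist_le_infDist_add_dist (x := x₀) (y := x) (s := (β : Set E))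
      rw [dist_comm] at this
      exact Real.rpow_le_rpow (by positivity) (by linarith) hr
    rw [Real.mul_rpow (by norm_num) hρ.le] at hβx
    linarith
  have h := hμ.integral_add_mul_le (integrable_infDist_rpow hK hr (Finset.coe_nonempty.2 hβ))
    (integrable_infDist_rpow hK hr ⟨x₀, hx₀γ⟩) hx₀ hρ hρε
    (mul_nonneg (by linarith) (Real.rpow_nonneg hρ.le r))
    (fun x => Real.rpow_le_rpow infDist_nonneg
      (infDist_le_infDist_of_subset hβγ (Finset.coe_nonempty.2 hβ)) hr) h_on
  have hγn := quantErrPow_le_integral (μ := μ) (r := r) ⟨x₀, Finset.mem_insert_self x₀ β⟩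
    ((Finset.card_insert_le x₀ β).trans hcard)
  rw [Real.rpow_add hρ]
  linarith

theorem IsAhlfors.quantErrPow_lt_integral [SecondCountableTopology E] [IsProbabilityMeasure μ]
    (hμ : IsAhlfors μ s0 ε0 C1 C2) (hr : 0 < r) (hK : Bornology.IsBounded (msupp μ))
    {β : Finset E} (hβ : β.Nonempty) (hcard : β.card < n) :
    quantErrPow μ r n < ∫ x, infDist x (β : Set E) ^ r ∂μ := by
  have := hμ.nullSingletonClass
  obtain ⟨x₀, hx₀β, hx₀⟩ : ((β : Set E)ᶜ ∩ msupp μ).Nonempty := by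
    refine nonempty_inter_msupp ?_
    rw [(prob_compl_eq_one_iff β.finite_toSet.measurableSet).2 (β.finite_toSet.measure_zero μ)]
    exact one_ne_zero
  have hd : 0 < infDist x₀ (β : Set E) :=
    (β.finite_toSet.isClosed.notMem_iff_infDist_pos (Finset.coe_nonempty.2 hβ)).1 hx₀β
  have hε0 := hμ.2.1
  set ρ := min (infDist x₀ (β : Set E) / 4) (ε0 / 2)
  have hρ : 0 < ρ := lt_min (by positivity) (by positivity)
  have hgain := hμ.quantErrPow_add_le_integral hr.le hK hβ hcard hx₀ hρ
    ((min_le_right _ _).trans_lt (by linarith))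
    (by linarith [min_le_left (infDist x₀ (β : Set E) / 4) (ε0 / 2)])
  have h3r : 0 < (3 : ℝ) ^ r - 1 := sub_pos.2 (Real.one_lt_rpow (by norm_num) hr)
  have := mul_pos (mul_pos h3r hμ.2.2.1) (Real.rpow_pos_of_pos hρ (s0 + r))
  linarith

theorem IsVoronoiPartition.integral_infDist_erase_le [DecidableEq E] [SecondCountableTopology E]
    [IsFiniteMeasure μ] (hP : IsVoronoiPartition α P) (hr : 0 ≤ r)
    (hK : Bornology.IsBounded (msupp μ)) (ha : a ∈ α) {b : E} (hb : b ∈ α.erase a) {D : ℝ}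
    (hD : ∀ x ∈ P a ∩ msupp μ, dist x b ≤ D) :
    ∫ x, infDist x ((α.erase a : Finset E) : Set E) ^ r ∂μ
      ≤ ∫ x, infDist x (α : Set E) ^ r ∂μ + D ^ r * μ.real (P a) := by
  refine integral_le_integral_add_mul_measureReal
    (integrable_infDist_rpow hK hr ⟨a, Finset.mem_coe.2 ha⟩)
    (integrable_infDist_rpow hK hr ⟨b, Finset.mem_coe.2 hb⟩) (hP.1 a ha)
    (ae_of_all _ fun x hx => by rw [hP.infDist_erase_eq ⟨b, hb⟩ hx]) ?_
  filter_upwards [msupp_mem_ae μ] with x hxK hxP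
  have hle : infDist x ((α.erase a : Finset E) : Set E) ^ r ≤ D ^ r :=
    Real.rpow_le_rpow infDist_nonneg
      ((infDist_le_dist_of_mem (Finset.mem_coe.2 hb)).trans (hD x ⟨hxP, hxK⟩)) hr
  linarith [Real.rpow_nonneg (infDist_nonneg (x := x) (s := (α : Set E))) r]

theorem IsOptimalSet.voronoiI_le [SecondCountableTopology E] [IsFiniteMeasure μ]
    (hopt : IsOptimalSet μ r n α) (hr : 0 ≤ r)
    (hK : Bornology.IsBounded (msupp μ)) (P : E → Set E) (a : E) :
    voronoiI μ r α P a ≤ quantErrPow μ r n :=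
  hopt.2.2 ▸ setIntegral_le_integral
    (integrable_infDist_rpow hK hr (Finset.coe_nonempty.2 hopt.1))
    (ae_of_all _ fun _ => Real.rpow_nonneg infDist_nonneg r)

theorem IsOptimalSet.card_eq [SecondCountableTopology E] [IsProbabilityMeasure μ]
    (hopt : IsOptimalSet μ r n α) (hμ : IsAhlfors μ s0 ε0 C1 C2)
    (hr : 0 < r) (hK : Bornology.IsBounded (msupp μ)) : α.card = n := by
  by_contra h
  exact (hμ.quantErrPow_lt_integral hr hK hopt.1 (hopt.2.1.lt_of_ne h)).ne' hopt.2.2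

theorem IsOptimalSet.measure_ne_zero [SecondCountableTopology E] [IsProbabilityMeasure μ]
    (hopt : IsOptimalSet μ r n α) (hμ : IsAhlfors μ s0 ε0 C1 C2) (hr : 0 < r)
    (hK : Bornology.IsBounded (msupp μ))
    (hn : 2 ≤ n) (hP : IsVoronoiPartition α P) (ha : a ∈ α) : μ (P a) ≠ 0 := by
  classical
  intro h0
  have hcard := hopt.card_eq hμ hr hK
  obtain ⟨b, hb, hba⟩ := α.exists_mem_ne (by omega) a
  have hb' : b ∈ α.erase a := Finset.mem_erase.2 ⟨hba, hb⟩
  obtain ⟨R, hR⟩ := hK.subset_closedBall b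
  have hle := hP.integral_infDist_erase_le hr.le hK ha hb' fun x hx => hR hx.2
  rw [measureReal_def, h0, ENNReal.toReal_zero, mul_zero, add_zero, hopt.2.2] at hle
  have hlt := hμ.quantErrPow_lt_integral (n := n) hr hK ⟨b, hb'⟩
    (by rw [Finset.card_erase_of_mem ha]; omega)
  linarith

theorem IsOptimalSet.exists_light_cell [DecidableEq E] [SecondCountableTopology E]
    [IsProbabilityMeasure μ] (hopt : IsOptimalSet μ r n α)
    (hμ : IsAhlfors μ s0 ε0 C1 C2) (hr : 0 < r) (hP : IsVoronoiPartition α P) {η δ : ℝ}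
    (hη : 0 < η) (hηδ : 2 * η ≤ δ) (hδ : ∀ x ∈ msupp μ, infDist x (α : Set E) ≤ δ) {N c : ℕ}
    (hg : IsGreatest {j | PackingNum (msupp μ) η j} N) (hc : 2 ≤ c) (hn : c * N ≤ n) :
    ∃ a ∈ α, ∃ b ∈ α.erase a,
      c * μ.real (P a) ≤ C2 * (3 * δ) ^ s0 ∧ ∀ x ∈ P a ∩ msupp μ, dist x b ≤ 5 * δ := by
  have hK := isBounded_of_isGreatest_packingNum hg
  have hN : 0 < N := hg.2 (packingNum_one (msupp_nonempty μ) η)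
  have hcard := hopt.card_eq hμ hr hK
  have hcell : ∀ a ∈ α, ∀ x ∈ P a ∩ msupp μ, dist x a ≤ δ := fun a ha x hx =>
    (hP.dist_eq_infDist ha hx.1).trans_le (hδ x hx.2)
  obtain ⟨z, -, hnet⟩ := exists_net_of_isGreatest_packingNum hg
  have hnear : ∀ a ∈ α, ∃ i, dist a (z i) ≤ 2 * δ := by
    intro a ha
    obtain ⟨x, hxP, hxK⟩ :=
      nonempty_inter_msupp (hopt.measure_ne_zero hμ hr hK (by nlinarith) hP ha)
    obtain ⟨i, hi⟩ := hnet x hxK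
    refine ⟨i, (dist_triangle_left a (z i) x).trans ?_⟩
    linarith [hcell a ha x ⟨hxP, hxK⟩]
  obtain ⟨i, F, hFα, hcF, hF⟩ := exists_large_cluster hN z hnear (hcard ▸ hn)
  have hF0 : F.Nonempty := Finset.card_pos.1 (by omega)
  obtain ⟨a, haF, hmass⟩ := exists_card_mul_measure_le hF0 (μ := μ)
    (Q := fun a => P a ∩ msupp μ)
    (fun a ha => (hP.1 a (hFα ha)).inter (isClosed_msupp μ).measurableSet)
    (fun a ha b hb hab =>
      (hP.2.2.1 a (hFα ha) b (hFα hb) hab).mono inter_subset_left inter_subset_left)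
    (S := closedBall (z i) (3 * δ)) fun a ha x hx => by
      rw [mem_closedBall]
      linarith [dist_triangle x a (z i), hcell a (hFα ha) x hx, hF a ha]
  obtain ⟨b, hbF, hba⟩ := F.exists_mem_ne (by omega) a
  refine ⟨a, hFα haF, b, Finset.mem_erase.2 ⟨hba, hFα hbF⟩, ?_, fun x hx => ?_⟩
  · have hC2 := hμ.2.2.2.1
    have hδ0 : 0 < δ := by linarith
    rw [measure_inter_conull (msupp_mem_ae μ)] at hmass
    have h := ENNReal.toReal_le_of_le_ofReal (by positivity)
      (hmass.trans (hμ.2.2.2.2.2 (z i) (3 * δ) (by positivity)))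
    rw [ENNReal.toReal_mul, ENNReal.toReal_natCast, ← measureReal_def] at h
    calc (c : ℝ) * μ.real (P a) ≤ F.card * μ.real (P a) := by gcongr
      _ ≤ C2 * (3 * δ) ^ s0 := h
  · linarith [dist_triangle x a b, hcell a (hFα haF) x hx, dist_triangle_right a b (z i),
      hF a haF, hF b hbF]

theorem IsOptimalSet.mul_le_of_far_point [SecondCountableTopology E] [IsProbabilityMeasure μ]
    (hopt : IsOptimalSet μ r n α) (hμ : IsAhlfors μ s0 ε0 C1 C2) (hr : 0 < r)
    (hP : IsVoronoiPartition α P) {η δ : ℝ} (hη : 0 < η) (hηδ : 2 * η ≤ δ) (hδε : δ < 4 * ε0)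
    (hδ : ∀ x ∈ msupp μ, infDist x (α : Set E) ≤ δ) {x₀ : E} (hx₀ : x₀ ∈ msupp μ)
    (hx₀δ : δ ≤ infDist x₀ (α : Set E)) {N c : ℕ}
    (hg : IsGreatest {j | PackingNum (msupp μ) η j} N) (hc2 : 2 ≤ c) (hn : c * N ≤ n) :
    c * ((3 ^ r - 1) * C1) ≤ 4 ^ (s0 + r) * 5 ^ r * 3 ^ s0 * C2 := by
  classical
  have hK := isBounded_of_isGreatest_packingNum hg
  have hδ0 : 0 < δ := by linarith
  have hN : 0 < N := hg.2 (packingNum_one (msupp_nonempty μ) η)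
  have hn2 : 2 ≤ n := by nlinarith
  obtain ⟨a, ha, b, hb, hmass, hdist⟩ :=
    hopt.exists_light_cell hμ hr hP hη hηδ hδ hg hc2 hn
  have hloss := hP.integral_infDist_erase_le hr.le hK ha hb hdist
  have hfar : infDist x₀ (α : Set E) ≤ infDist x₀ ((α.erase a : Finset E) : Set E) :=
    infDist_le_infDist_of_subset (by simp) (Finset.coe_nonempty.2 ⟨b, hb⟩)
  have hgain := hμ.quantErrPow_add_le_integral (n := n) hr.le hK ⟨b, hb⟩
    (by rw [Finset.card_erase_of_mem ha, hopt.card_eq hμ hr hK]; omega) hx₀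
    (by positivity : 0 < δ / 4) (by linarith) (by linarith)
  rw [hopt.2.2] at hloss
  have h4 : (δ / 4) ^ (s0 + r) * 4 ^ (s0 + r) = δ ^ s0 * δ ^ r := by
    rw [Real.div_rpow hδ0.le (by norm_num), div_mul_cancel₀ _ (by positivity),
      Real.rpow_add hδ0]
  have hX := measureReal_nonneg (μ := μ) (s := P a)
  refine le_of_mul_le_mul_right ?_ (by positivity : 0 < δ ^ s0 * δ ^ r)
  calc (c : ℝ) * ((3 ^ r - 1) * C1) * (δ ^ s0 * δ ^ r)
      = 4 ^ (s0 + r) * (c * ((3 ^ r - 1) * C1 * (δ / 4) ^ (s0 + r))) := by rw [← h4]; ring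
    _ ≤ 4 ^ (s0 + r) * (c * ((5 * δ) ^ r * μ.real (P a))) := by
        gcongr 4 ^ (s0 + r) * (c * ?_); linarith
    _ = 4 ^ (s0 + r) * 5 ^ r * δ ^ r * (c * μ.real (P a)) := by
        rw [Real.mul_rpow (by norm_num) hδ0.le]; ring
    _ ≤ 4 ^ (s0 + r) * 5 ^ r * δ ^ r * (C2 * (3 * δ) ^ s0) := by gcongr
    _ = 4 ^ (s0 + r) * 5 ^ r * 3 ^ s0 * C2 * (δ ^ s0 * δ ^ r) := by
        rw [Real.mul_rpow (by norm_num) hδ0.le]; ring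

theorem IsOptimalSet.infDist_le [ProperSpace E] [IsProbabilityMeasure μ]
    (hopt : IsOptimalSet μ r n α) (hμ : IsAhlfors μ s0 ε0 C1 C2)
    (hr : 0 < r) (hP : IsVoronoiPartition α P) {η : ℝ} (hη : 0 < η)
    (hsmall : (2 * η) ^ r < C1 * (ε0 / 2) ^ (s0 + r)) {N c : ℕ}
    (hg : IsGreatest {j | PackingNum (msupp μ) η j} N) (hc2 : 2 ≤ c)
    (hc : 4 ^ (s0 + r) * 5 ^ r * 3 ^ s0 * C2 < c * ((3 ^ r - 1) * C1)) (hn : c * N ≤ n) :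
    ∀ x ∈ msupp μ, infDist x (α : Set E) ≤ 2 * η := by
  have hε0 := hμ.2.1
  have hK := isBounded_of_isGreatest_packingNum hg
  obtain ⟨x₀, hx₀, hmax⟩ :=
    (hK.isCompact_closure.of_isClosed_subset (isClosed_msupp μ) subset_closure).exists_isMaxOn
      (msupp_nonempty μ) (continuous_infDist_pt (α : Set E)).continuousOn
  have hN : 0 < N := hg.2 (packingNum_one (msupp_nonempty μ) η)
  have hquant : quantErrPow μ r n ≤ (2 * η) ^ r :=
    quantErrPow_le_of_isGreatest_packingNum hr.le hg (by nlinarith)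
  have hδε := hμ.infDist_lt_of_integral_lt hr.le hK (Finset.coe_nonempty.2 hopt.1)
    (half_pos hε0) (half_lt_self hε0) (hopt.2.2 ▸ hquant.trans_lt hsmall) hx₀
  intro x hx
  refine (hmax hx).trans ?_
  by_contra! hηδ
  exact hc.not_ge (hopt.mul_le_of_far_point hμ hr hP hη hηδ.le (by linarith)
    (fun x hx => hmax hx) hx₀ le_rfl hg hc2 hn)

end Quantization

theorem stmt16_general {E : Type*} [NormedAddCommGroup E] [NormedSpace ℝ E]
    [MeasurableSpace E] [BorelSpace E] [FiniteDimensional ℝ E]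
    (r : ℝ) (hr : 0 < r)
    (μ : MeasureTheory.Measure E) [MeasureTheory.IsProbabilityMeasure μ]
    (s0 ε0 C1 C2 : ℝ) (hμ : IsAhlfors μ s0 ε0 C1 C2)
    (m : ℕ) (hm : 2 ≤ m) (k0 : ℕ)
    (φ : ℕ → ℕ)
    (hφ : ∀ k, k0 ≤ k →
      IsGreatest {j | PackingNum (msupp μ) (((m : ℝ) ^ k)⁻¹) j} (φ k)) :
    ∃ c : ℕ, ∃ C3 : ℝ, 0 < c ∧ 0 < C3 ∧
      ∀ k, k0 ≤ k → ∀ n : ℕ, c * φ k ≤ n → n < c * φ (k + 1) →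
        ∀ α : Finset E, IsOptimalSet μ r n α →
          ∀ P : E → Set E, IsVoronoiPartition α P →
            ∀ a ∈ α, voronoiI μ r α P a ≤ C3 * (((m : ℝ) ^ k)⁻¹) ^ (s0 + r) := by
  obtain ⟨hs0, hε0, hC1, hC2, -⟩ := id hμ
  have h3r : 0 < (3 : ℝ) ^ r - 1 := sub_pos.2 (Real.one_lt_rpow (by norm_num) hr)
  have hK := isBounded_of_isGreatest_packingNum (hφ k0 le_rfl)
  set B := 4 ^ (s0 + r) * 5 ^ r * 3 ^ s0 * C2 / ((3 ^ r - 1) * C1)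
  have hB : B < ⌈B⌉₊ + 2 := by linarith [Nat.le_ceil B]
  set η₁ := (C1 * (ε0 / 2) ^ (s0 + r)) ^ r⁻¹
  have hη₁ : 0 < η₁ := by positivity
  refine ⟨⌈B⌉₊ + 2, max C2 (η₁ ^ s0)⁻¹ * 2 ^ (s0 + r), by omega,
    mul_pos (lt_max_of_lt_left hC2) (by positivity), fun k hk n hn _ α hopt P hP a ha => ?_⟩
  set η : ℝ := ((m : ℝ) ^ k)⁻¹
  have hm0 : (0 : ℝ) < m := Nat.cast_pos.2 (by omega)
  have hη : 0 < η := by positivity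
  suffices h : voronoiI μ r α P a ≤ max C2 (η₁ ^ s0)⁻¹ * (2 * η) ^ (s0 + r) by
    rwa [Real.mul_rpow zero_le_two hη.le, ← mul_assoc] at h
  rcases lt_or_ge (2 * η) η₁ with hsmall | hlarge
  · have hcov := hopt.infDist_le hμ hr hP hη
      ((Real.lt_rpow_inv_iff_of_pos (by positivity) (by positivity) hr).1 hsmall) (hφ k hk)
      (by omega) (by push_cast; rwa [div_lt_iff₀ (by positivity)] at hB) hn
    calc voronoiI μ r α P a ≤ C2 * (2 * η) ^ (s0 + r) :=
          hμ.voronoiI_le hP hr.le ha (by positivity) fun x hx => hcov x hx.2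
      _ ≤ _ := by gcongr; exact le_max_left _ _
  · calc voronoiI μ r α P a ≤ quantErrPow μ r n := hopt.voronoiI_le hr.le hK P a
      _ ≤ (2 * η) ^ r :=
          quantErrPow_le_of_isGreatest_packingNum hr.le (hφ k hk) (by nlinarith)
      _ ≤ (2 * η) ^ r * (2 * η / η₁) ^ s0 := le_mul_of_one_le_right (by positivity)
          (Real.one_le_rpow ((one_le_div hη₁).2 hlarge) hs0.le)
      _ = (η₁ ^ s0)⁻¹ * (2 * η) ^ (s0 + r) := by
          rw [Real.div_rpow (by positivity) hη₁.le, Real.rpow_add (by positivity)]; ring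
      _ ≤ _ := by gcongr; exact le_max_right _ _

/-- There exist a positive integer `c` and a constant `C3 > 0` such that for
every `k ≥ k0`, every `n` with `c·φ_k ≤ n < c·φ_{k+1}`, every `n`-optimal set `α`, every Voronoi
partition `P` and every `a ∈ α`: `I_a(α,μ) ≤ C3·m^{−k(s0+r)}`. -/
theorem stmt16 {E : Type*} [NormedAddCommGroup E] [NormedSpace ℝ E]
    [MeasurableSpace E] [BorelSpace E] [FiniteDimensional ℝ E]
    (r : ℝ) (hr : 0 < r)
    (μ : MeasureTheory.Measure E) [MeasureTheory.IsProbabilityMeasure μ]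
    (s0 ε0 C1 C2 : ℝ) (hμ : IsAhlfors μ s0 ε0 C1 C2)
    (m : ℕ) (hm : 2 ≤ m) (k0 : ℕ)
    (hk0 : 2 * ((m : ℝ) ^ k0)⁻¹ < ε0)
    (hk0min : ∀ j : ℕ, 2 * ((m : ℝ) ^ j)⁻¹ < ε0 → k0 ≤ j)
    (φ : ℕ → ℕ)
    (hφ : ∀ k, k0 ≤ k →
      IsGreatest {j | PackingNum (msupp μ) (((m : ℝ) ^ k)⁻¹) j} (φ k)) :
    ∃ c : ℕ, ∃ C3 : ℝ, 0 < c ∧ 0 < C3 ∧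
      ∀ k, k0 ≤ k → ∀ n : ℕ, c * φ k ≤ n → n < c * φ (k + 1) →
        ∀ α : Finset E, IsOptimalSet μ r n α →
          ∀ P : E → Set E, IsVoronoiPartition α P →
            ∀ a ∈ α, voronoiI μ r α P a ≤ C3 * (((m : ℝ) ^ k)⁻¹) ^ (s0 + r) :=
  stmt16_general r hr μ s0 ε0 C1 C2 hμ m hm k0 φ hφ
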